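/- Let τ be a finite relational signature and let Γ and Δ be valued τ-structures with countable domains and oligomorphic automorphism groups that are fractionally homomorphically equivalent. Then for every τ-expression φ the cost of φ with respect to Γ equals the cost of φ with respect to Δ, both costs are attained, and for every u ∈ ℚ the pair (φ,u) has a solution with respect to Γ if and only if it has a solution with respect to Δ. -/

import Mathlib

open MeasureTheory
open scoped ENNReal NNReal

/-- The value space `ℚ ∪ {∞}`. -/
abbrev QInf : Type := WithTop ℚ

/-- The embedding of `ℚ ∪ {∞}` into the extended reals. -/
noncomputable def QInf.toE (x : QInf) : EReal :=
  WithTop.recTopCoe ⊤ (fun q : ℚ => ((q : ℝ) : EReal)) x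

/-- A relational signature: a collection of relation symbols with arities. -/
structure Signature where
  symbols : Type
  arity : symbols → ℕ

/-- A valued `τ`-structure with domain `C`: each symbol is interpreted as a valued relation. -/
def VStruct (τ : Signature) (C : Type) : Type :=
  ∀ s : τ.symbols, (Fin (τ.arity s) → C) → QInf

/-- An atom `R(x_{i_1},…,x_{i_k})` with variables from `V`. -/
structure SAtom (τ : Signature) (V : Type) where
  sym : τ.symbols
  vars : Fin (τ.arity sym) → V

/-- A `τ`-expression: a finite formal sum of atoms. -/
def Expr (τ : Signature) (V : Type) : Type := List (SAtom τ V)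

/-- Evaluation of a `τ`-expression in a valued structure. -/
def Expr.eval {τ : Signature} {C V : Type} (Γ : VStruct τ C) (φ : Expr τ V)
    (a : V → C) : QInf :=
  (φ.map fun t => Γ t.sym fun i => a (t.vars i)).sum

/-- The product topology on `D → C` where `C` carries the discrete topology. -/
def fnTop (D C : Type) : TopologicalSpace (D → C) :=
  @Pi.topologicalSpace D (fun _ => C) (fun _ => ⊥)

/-- The Borel σ-algebra on `D → C` for the product of discrete topologies. -/
noncomputable def fnBorel (D C : Type) : MeasurableSpace (D → C) :=
  @borel (D → C) (fnTop D C)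

/-- A fractional map from `D` to `C`: a Borel probability measure on `C^D`. -/
def IsFracMap {D C : Type} (ω : @Measure (D → C) (fnBorel D C)) : Prop :=
  @IsProbabilityMeasure (D → C) (fnBorel D C) ω

/-- The positive part of an extended real, as an extended nonnegative real. -/
noncomputable def erealPos (x : EReal) : ℝ≥0∞ :=
  if x = ⊤ then ⊤ else ENNReal.ofReal x.toReal

/-- The `EReal`-valued Lebesgue integral: integral of the positive part minus
integral of the negative part. -/
noncomputable def EIntV {D C : Type} (ω : @Measure (D → C) (fnBorel D C))
    (X : (D → C) → EReal) : EReal :=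
  ((@MeasureTheory.lintegral (D → C) (fnBorel D C) ω fun f => erealPos (X f) : ℝ≥0∞) : EReal)
    - ((@MeasureTheory.lintegral (D → C) (fnBorel D C) ω fun f => erealPos (-X f) : ℝ≥0∞) : EReal)

/-- Existence of the `EReal`-valued Lebesgue integral: the integrand is Borel measurable and
not both the positive and the negative part have infinite integral. -/
def EIntEx {D C : Type} (ω : @Measure (D → C) (fnBorel D C)) (X : (D → C) → EReal) : Prop :=
  (@Measurable (D → C) EReal (fnBorel D C) inferInstance X) ∧
    ((@MeasureTheory.lintegral (D → C) (fnBorel D C) ω fun f => erealPos (X f)) ≠ ⊤ ∨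
      (@MeasureTheory.lintegral (D → C) (fnBorel D C) ω fun f => erealPos (-X f)) ≠ ⊤)

/-- A fractional homomorphism from `Δ` to `Γ`. -/
def IsFracHom {τ : Signature} {D C : Type} (Δ : VStruct τ D) (Γ : VStruct τ C)
    (ω : @Measure (D → C) (fnBorel D C)) : Prop :=
  IsFracMap ω ∧
    ∀ (s : τ.symbols) (a : Fin (τ.arity s) → D),
      EIntEx ω (fun f => QInf.toE (Γ s (f ∘ a))) ∧
        EIntV ω (fun f => QInf.toE (Γ s (f ∘ a))) ≤ QInf.toE (Δ s a)

/-- An automorphism of a valued structure. -/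
def IsVAuto {τ : Signature} {C : Type} (Γ : VStruct τ C) (α : Equiv.Perm C) : Prop :=
  ∀ (s : τ.symbols) (a : Fin (τ.arity s) → C), Γ s (fun i => α (a i)) = Γ s a

/-- The automorphism group of a valued structure is oligomorphic: for each `k` there are
finitely many orbits of `k`-tuples. -/
def VOligo {τ : Signature} {C : Type} (Γ : VStruct τ C) : Prop :=
  ∀ k : ℕ, ∃ F : Set (Fin k → C), F.Finite ∧
    ∀ a : Fin k → C, ∃ b ∈ F, ∃ α : Equiv.Perm C,
      IsVAuto Γ α ∧ (fun i => α (b i)) = a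

/-!
Oligomorphicity forces every expression, and every relation, to take only finitely many values,
so costs are attained and all integrands that occur are bounded below by a real number. For such
integrands the `EReal`-valued integral is subadditive, so summing the defining inequalities of a
fractional homomorphism `ω` from `Δ` to `Γ` over the atoms of `φ` gives
`E_ω[φ^Γ(f ∘ a)] ≤ φ^Δ(a)`. As `φ^Γ(f ∘ a)` is never below the cost of `φ` in `Γ`, that cost is at
most `φ^Δ(a)` for every `a`, hence at most the cost in `Δ`; by symmetry the costs agree, and the
statement about thresholds follows because both costs are attained.
-/

namespace QInf

lemma toE_top : toE ⊤ = ⊤ := rfl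

lemma toE_coe (q : ℚ) : toE q = ((q : ℝ) : EReal) := rfl

lemma toE_ne_bot (x : QInf) : toE x ≠ ⊥ := by
  induction x using WithTop.recTopCoe <;> simp [toE_top, toE_coe]

lemma toE_le_toE {x y : QInf} : toE x ≤ toE y ↔ x ≤ y := by
  induction x using WithTop.recTopCoe <;> induction y using WithTop.recTopCoe <;>
    simp [toE_top, toE_coe]

lemma toE_add (x y : QInf) : toE (x + y) = toE x + toE y := by
  induction x using WithTop.recTopCoe <;> induction y using WithTop.recTopCoe <;>
    simp [toE_top, toE_coe, ← WithTop.coe_add]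

lemma toE_zero : toE 0 = 0 := by simp [← WithTop.coe_zero, toE_coe]

end QInf

lemma erealPos_top : erealPos ⊤ = ⊤ := rfl

lemma erealPos_coe (r : ℝ) : erealPos r = ENNReal.ofReal r := by simp [erealPos]

lemma erealPos_mono : Monotone erealPos := by
  intro x y hxy
  induction y using EReal.rec with
  | top => simp [erealPos_top]
  | bot => simp [le_bot_iff.1 hxy, erealPos]
  | coe b => induction x using EReal.rec with
    | top => simp at hxy
    | bot => simp [erealPos]
    | coe a => simpa [erealPos_coe] using ENNReal.ofReal_le_ofReal (EReal.coe_le_coe_iff.1 hxy)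

lemma measurable_erealPos : Measurable erealPos := erealPos_mono.measurable

lemma erealPos_add_add_erealPos_neg_add_erealPos_neg {x y : EReal} (hx : x ≠ ⊥) (hy : y ≠ ⊥) :
    erealPos (x + y) + erealPos (-x) + erealPos (-y)
      = erealPos x + erealPos y + erealPos (-(x + y)) := by
  induction x using EReal.rec with
  | bot => exact absurd rfl hx
  | top => simp [EReal.top_add_of_ne_bot hy, erealPos]
  | coe a => induction y using EReal.rec with
    | bot => exact absurd rfl hy
    | top => simp [erealPos_top]
    | coe b =>
      rw [← EReal.coe_add, ← EReal.coe_neg, ← EReal.coe_neg, ← EReal.coe_neg]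
      simp only [erealPos_coe]
      rw [← ENNReal.toReal_eq_toReal_iff' (by finiteness) (by finiteness)]
      simp [ENNReal.toReal_add, ENNReal.toReal_ofReal', max_def]
      split_ifs <;> linarith

lemma coe_sub_le_coe_sub_add_coe_sub {p px py n nx ny : ℝ≥0∞} (hn : n ≠ ⊤) (hnx : nx ≠ ⊤)
    (hny : ny ≠ ⊤) (h : p + nx + ny = px + py + n) :
    (p : EReal) - n ≤ ((px : EReal) - nx) + ((py : EReal) - ny) := by
  lift n to ℝ≥0 using hn
  lift nx to ℝ≥0 using hnx
  lift ny to ℝ≥0 using hny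
  simp only [EReal.coe_nnreal_eq_coe_real]
  rcases eq_or_ne px ⊤ with rfl | hpx
  · rw [EReal.coe_ennreal_top, EReal.top_sub_coe,
      EReal.top_add_of_ne_bot (by simp [sub_eq_add_neg, EReal.add_eq_bot_iff])]
    exact le_top
  rcases eq_or_ne py ⊤ with rfl | hpy
  · rw [EReal.coe_ennreal_top, EReal.top_sub_coe,
      EReal.add_top_of_ne_bot (by simp [sub_eq_add_neg, EReal.add_eq_bot_iff])]
    exact le_top
  lift px to ℝ≥0 using hpx
  lift py to ℝ≥0 using hpy
  lift p to ℝ≥0 using (by rintro rfl; simp at h; exact absurd h.symm (by finiteness))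
  have h' : (p : ℝ) + nx + ny = px + py + n := by exact_mod_cast h
  simp only [EReal.coe_nnreal_eq_coe_real, ← EReal.coe_sub, ← EReal.coe_add, EReal.coe_le_coe_iff]
  linarith

lemma measurable_fnBorel_comp_precomp {D C : Type} {ι β : Type*} [Finite ι] [MeasurableSpace β]
    (a : ι → D) (h : (ι → C) → β) :
    Measurable[fnBorel D C] (fun f => h (f ∘ a)) :=
  letI : TopologicalSpace C := ⊥
  haveI : DiscreteTopology C := ⟨rfl⟩
  letI : TopologicalSpace (D → C) := fnTop D C
  letI : MeasurableSpace (D → C) := fnBorel D C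
  haveI : BorelSpace (D → C) := ⟨rfl⟩
  letI : MeasurableSpace (ι → C) := ⊤
  have hc : Continuous fun f : D → C => f ∘ a := continuous_pi fun i => continuous_apply (a i)
  measurable_from_top.comp hc.measurable

section FracMapIntegral

variable {D C : Type} {ω : @Measure (D → C) (fnBorel D C)}

lemma lintegral_erealPos_neg_le (hω : IsFracMap ω) {X : (D → C) → EReal} {c : ℝ}
    (hX : ∀ f, (c : EReal) ≤ X f) : ∫⁻ f, erealPos (-X f) ∂ω ≤ ENNReal.ofReal (-c) := by
  have : IsProbabilityMeasure ω := hω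
  calc ∫⁻ f, erealPos (-X f) ∂ω ≤ ∫⁻ _, ENNReal.ofReal (-c) ∂ω :=
        lintegral_mono fun f => by
          rw [← erealPos_coe, EReal.coe_neg]
          exact erealPos_mono (EReal.neg_le_neg_iff.2 (hX f))
    _ = ENNReal.ofReal (-c) := by simp

lemma le_EIntV_of_forall_le (hω : IsFracMap ω) {X : (D → C) → EReal} {c : EReal} (hc : c ≠ ⊥)
    (hX : ∀ f, c ≤ X f) : c ≤ EIntV ω X := by
  have : IsProbabilityMeasure ω := hω
  induction c using EReal.rec with
  | bot => exact absurd rfl hc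
  | top =>
    have hXtop : ∀ f, X f = ⊤ := fun f => top_le_iff.1 (hX f)
    simp [EIntV, hXtop, erealPos]
  | coe c =>
    have hpos : ENNReal.ofReal c ≤ ∫⁻ f, erealPos (X f) ∂ω :=
      calc ENNReal.ofReal c = ∫⁻ _, ENNReal.ofReal c ∂ω := by simp
        _ ≤ _ := lintegral_mono fun f => by simpa [erealPos_coe] using erealPos_mono (hX f)
    calc (c : EReal) = (ENNReal.ofReal c : EReal) - (ENNReal.ofReal (-c) : EReal) := by
          rcases le_total c 0 with hc | hc <;> simp [hc, ENNReal.ofReal_of_nonpos]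
      _ ≤ EIntV ω X := EReal.sub_le_sub (by exact_mod_cast hpos)
          (by exact_mod_cast lintegral_erealPos_neg_le hω (fun f => hX f))

lemma EIntV_add_le (hω : IsFracMap ω) {X Y : (D → C) → EReal}
    (hXm : Measurable[fnBorel D C] X) (hYm : Measurable[fnBorel D C] Y) {cX cY : ℝ}
    (hX : ∀ f, (cX : EReal) ≤ X f) (hY : ∀ f, (cY : EReal) ≤ Y f) :
    EIntV ω (X + Y) ≤ EIntV ω X + EIntV ω Y := by
  have hXY : ∀ f, ((cX + cY : ℝ) : EReal) ≤ (X + Y) f := fun f => add_le_add (hX f) (hY f)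
  have hbot : ∀ {c : ℝ} {f} {Z : (D → C) → EReal}, (c : EReal) ≤ Z f → Z f ≠ ⊥ :=
    fun h hZ => EReal.coe_ne_bot _ (le_bot_iff.1 (hZ ▸ h))
  have pos_meas : ∀ {Z : (D → C) → EReal}, Measurable[fnBorel D C] Z →
      Measurable[fnBorel D C] fun f => erealPos (Z f) := measurable_erealPos.comp
  have neg_meas : ∀ {Z : (D → C) → EReal}, Measurable[fnBorel D C] Z →
      Measurable[fnBorel D C] fun f => erealPos (-Z f) :=
    fun hZ => measurable_erealPos.comp hZ.neg
  have key : ∫⁻ f, erealPos ((X + Y) f) ∂ω + ∫⁻ f, erealPos (-X f) ∂ω + ∫⁻ f, erealPos (-Y f) ∂ω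
      = ∫⁻ f, erealPos (X f) ∂ω + ∫⁻ f, erealPos (Y f) ∂ω + ∫⁻ f, erealPos (-(X + Y) f) ∂ω :=
    calc _ = ∫⁻ f, erealPos ((X + Y) f) + erealPos (-X f) + erealPos (-Y f) ∂ω := by
          rw [lintegral_add_right _ (neg_meas hYm), lintegral_add_right _ (neg_meas hXm)]
      _ = ∫⁻ f, erealPos (X f) + erealPos (Y f) + erealPos (-(X + Y) f) ∂ω :=
          lintegral_congr fun f =>
            erealPos_add_add_erealPos_neg_add_erealPos_neg (hbot (hX f)) (hbot (hY f))
      _ = _ := by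
          rw [lintegral_add_right _ (neg_meas (hXm.add hYm)),
            lintegral_add_right _ (pos_meas hYm)]
  exact coe_sub_le_coe_sub_add_coe_sub
    (ne_top_of_le_ne_top ENNReal.ofReal_ne_top (lintegral_erealPos_neg_le hω hXY))
    (ne_top_of_le_ne_top ENNReal.ofReal_ne_top (lintegral_erealPos_neg_le hω hX))
    (ne_top_of_le_ne_top ENNReal.ofReal_ne_top (lintegral_erealPos_neg_le hω hY)) key

end FracMapIntegral

lemma exists_real_le_toE_of_finite_range {A : Type*} {g : A → QInf} (hg : (Set.range g).Finite) :
    ∃ c : ℝ, ∀ x, (c : EReal) ≤ QInf.toE (g x) := by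
  obtain ⟨m, hm⟩ := hg.bddBelow
  obtain ⟨q, hq⟩ : ∃ q : ℚ, (q : QInf) ≤ m := by
    induction m using WithTop.recTopCoe with
    | top => exact ⟨0, le_top⟩
    | coe q => exact ⟨q, le_rfl⟩
  exact ⟨q, fun x => QInf.toE_le_toE.2 (hq.trans (hm ⟨x, rfl⟩))⟩

namespace Expr

variable {τ : Signature} {C V : Type}

lemma eval_cons (Γ : VStruct τ C) (t : SAtom τ V) (φ : Expr τ V) (b : V → C) :
    eval Γ (t :: φ) b = Γ t.sym (fun i => b (t.vars i)) + eval Γ φ b := rfl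

lemma eval_perm {Γ : VStruct τ C} {α : Equiv.Perm C} (hα : IsVAuto Γ α) (φ : Expr τ V)
    (b : V → C) : eval Γ φ (α ∘ b) = eval Γ φ b :=
  congrArg List.sum (List.map_congr_left fun t _ => hα t.sym _)

noncomputable def cost (Γ : VStruct τ C) (φ : Expr τ V) : EReal :=
  ⨅ b : V → C, QInf.toE (eval Γ φ b)

end Expr

namespace VOligo

variable {τ : Signature} {C : Type} {Γ : VStruct τ C}

lemma finite_range (hΓ : VOligo Γ) {k : ℕ} {β : Type*} {h : (Fin k → C) → β}
    (hh : ∀ α, IsVAuto Γ α → ∀ b, h (α ∘ b) = h b) : (Set.range h).Finite := by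
  obtain ⟨F, hF, horb⟩ := hΓ k
  refine (hF.image h).subset ?_
  rintro _ ⟨b, rfl⟩
  obtain ⟨b₀, hb₀, α, hα, rfl⟩ := horb b
  exact ⟨b₀, hb₀, (hh α hα b₀).symm⟩

lemma exists_real_le_rel (hΓ : VOligo Γ) (s : τ.symbols) :
    ∃ c : ℝ, ∀ b, (c : EReal) ≤ QInf.toE (Γ s b) :=
  exists_real_le_toE_of_finite_range (hΓ.finite_range fun _ hα b => hα s b)

lemma finite_range_toE_eval (hΓ : VOligo Γ) {n : ℕ} (φ : Expr τ (Fin n)) :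
    (Set.range fun b => QInf.toE (φ.eval Γ b)).Finite :=
  hΓ.finite_range fun _ hα b => congrArg QInf.toE (φ.eval_perm hα b)

lemma exists_real_le_eval (hΓ : VOligo Γ) {n : ℕ} (φ : Expr τ (Fin n)) :
    ∃ c : ℝ, ∀ b, (c : EReal) ≤ QInf.toE (φ.eval Γ b) :=
  exists_real_le_toE_of_finite_range (hΓ.finite_range fun _ hα b => φ.eval_perm hα b)

lemma exists_eval_eq_cost [Nonempty C] (hΓ : VOligo Γ) {n : ℕ} (φ : Expr τ (Fin n)) :
    ∃ b, QInf.toE (φ.eval Γ b) = φ.cost Γ :=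
  (Set.range_nonempty _).csInf_mem (hΓ.finite_range_toE_eval φ)

lemma exists_eval_le_iff [Nonempty C] (hΓ : VOligo Γ) {n : ℕ} (φ : Expr τ (Fin n)) (u : QInf) :
    (∃ b, φ.eval Γ b ≤ u) ↔ φ.cost Γ ≤ QInf.toE u := by
  obtain ⟨b₀, hb₀⟩ := hΓ.exists_eval_eq_cost φ
  constructor
  · rintro ⟨b, hb⟩
    exact (iInf_le _ b).trans (QInf.toE_le_toE.2 hb)
  · intro h
    exact ⟨b₀, QInf.toE_le_toE.1 (hb₀ ▸ h)⟩

end VOligo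

namespace IsFracHom

variable {τ : Signature} {C D : Type} {Δ : VStruct τ D} {Γ : VStruct τ C}
  {ω : @Measure (D → C) (fnBorel D C)}

lemma EIntV_eval_le (hω : IsFracHom Δ Γ ω) (hΓ : VOligo Γ) {n : ℕ} (φ : Expr τ (Fin n))
    (a : Fin n → D) :
    EIntV ω (fun f => QInf.toE (φ.eval Γ (f ∘ a))) ≤ QInf.toE (φ.eval Δ a) := by
  induction φ with
  | nil => simp [Expr.eval, QInf.toE_zero, EIntV, erealPos]
  | cons t φ ih =>
    set X : (D → C) → EReal := fun f => QInf.toE (Γ t.sym (f ∘ a ∘ t.vars))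
    set Y : (D → C) → EReal := fun f => QInf.toE (Expr.eval Γ φ (f ∘ a))
    have hsplit : (fun f => QInf.toE (Expr.eval Γ (t :: φ) (f ∘ a))) = X + Y :=
      funext fun f => QInf.toE_add _ _
    obtain ⟨cX, hcX⟩ := hΓ.exists_real_le_rel t.sym
    obtain ⟨cY, hcY⟩ := hΓ.exists_real_le_eval φ
    rw [hsplit, Expr.eval_cons Δ t φ, QInf.toE_add]
    calc EIntV ω (X + Y) ≤ EIntV ω X + EIntV ω Y :=
          EIntV_add_le hω.1
            (measurable_fnBorel_comp_precomp a fun c => QInf.toE (Γ t.sym (c ∘ t.vars)))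
            (measurable_fnBorel_comp_precomp a fun c => QInf.toE (Expr.eval Γ φ c))
            (fun _ => hcX _) (fun _ => hcY _)
      _ ≤ _ := add_le_add (hω.2 t.sym (a ∘ t.vars)).2 ih

lemma cost_le [Nonempty C] (hω : IsFracHom Δ Γ ω) (hΓ : VOligo Γ) {n : ℕ}
    (φ : Expr τ (Fin n)) : φ.cost Γ ≤ φ.cost Δ := by
  obtain ⟨b₀, hb₀⟩ := hΓ.exists_eval_eq_cost φ
  refine le_iInf fun a => le_trans ?_ (hω.EIntV_eval_le hΓ φ a)
  exact le_EIntV_of_forall_le hω.1 (hb₀ ▸ QInf.toE_ne_bot _) fun f => iInf_le _ (f ∘ a)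

end IsFracHom

theorem frac_hom_equiv_same_cost_general {τ : Signature} {C D : Type}
    [Nonempty C] [Nonempty D]
    (Γ : VStruct τ C) (Δ : VStruct τ D)
    (hΓ : VOligo Γ) (hΔ : VOligo Δ)
    (ω₁ : @Measure (C → D) (fnBorel C D)) (hω₁ : IsFracHom Γ Δ ω₁)
    (ω₂ : @Measure (D → C) (fnBorel D C)) (hω₂ : IsFracHom Δ Γ ω₂)
    {n : ℕ} (φ : Expr τ (Fin n)) :
    ((⨅ b : Fin n → C, QInf.toE (Expr.eval Γ φ b)) =
        ⨅ a : Fin n → D, QInf.toE (Expr.eval Δ φ a)) ∧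
    (∃ b : Fin n → C,
        QInf.toE (Expr.eval Γ φ b) = ⨅ b' : Fin n → C, QInf.toE (Expr.eval Γ φ b')) ∧
    (∃ a : Fin n → D,
        QInf.toE (Expr.eval Δ φ a) = ⨅ a' : Fin n → D, QInf.toE (Expr.eval Δ φ a')) ∧
    ∀ u : ℚ, (∃ b : Fin n → C, Expr.eval Γ φ b ≤ (u : QInf)) ↔
        ∃ a : Fin n → D, Expr.eval Δ φ a ≤ (u : QInf) := by
  have hcost : φ.cost Γ = φ.cost Δ := le_antisymm (hω₂.cost_le hΓ φ) (hω₁.cost_le hΔ φ)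
  refine ⟨hcost, hΓ.exists_eval_eq_cost φ, hΔ.exists_eval_eq_cost φ, fun u => ?_⟩
  rw [hΓ.exists_eval_le_iff, hΔ.exists_eval_le_iff, hcost]

/-- if `Γ` and `Δ` are valued `τ`-structures with countable domains and
oligomorphic automorphism groups that are fractionally homomorphically equivalent, then for
every `τ`-expression `φ` the costs with respect to `Γ` and `Δ` coincide, both costs are
attained, and for every threshold `u ∈ ℚ` the instance `(φ,u)` has a solution with respect
to `Γ` iff it has one with respect to `Δ`. -/
theorem frac_hom_equiv_same_cost {τ : Signature} [Finite τ.symbols] {C D : Type}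
    [Countable C] [Countable D] [Nonempty C] [Nonempty D]
    (Γ : VStruct τ C) (Δ : VStruct τ D)
    (hΓ : VOligo Γ) (hΔ : VOligo Δ)
    (ω₁ : @Measure (C → D) (fnBorel C D)) (hω₁ : IsFracHom Γ Δ ω₁)
    (ω₂ : @Measure (D → C) (fnBorel D C)) (hω₂ : IsFracHom Δ Γ ω₂)
    {n : ℕ} (φ : Expr τ (Fin n)) :
    ((⨅ b : Fin n → C, QInf.toE (Expr.eval Γ φ b)) =
        ⨅ a : Fin n → D, QInf.toE (Expr.eval Δ φ a)) ∧
    (∃ b : Fin n → C,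
        QInf.toE (Expr.eval Γ φ b) = ⨅ b' : Fin n → C, QInf.toE (Expr.eval Γ φ b')) ∧
    (∃ a : Fin n → D,
        QInf.toE (Expr.eval Δ φ a) = ⨅ a' : Fin n → D, QInf.toE (Expr.eval Δ φ a')) ∧
    ∀ u : ℚ, (∃ b : Fin n → C, Expr.eval Γ φ b ≤ (u : QInf)) ↔
        ∃ a : Fin n → D, Expr.eval Δ φ a ≤ (u : QInf) :=
  frac_hom_equiv_same_cost_general Γ Δ hΓ hΔ ω₁ hω₁ ω₂ hω₂ φ
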